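/- arXiv:2410.19841 — 4 statements merged into one kernel-verified Lean document; each statement's English description precedes it below -/
import Mathlib

section
/- Let n ≥ 1, δ > 0, β < n+2, and c^{δ,β} = 2(n+2−β)Γ(n/2+1)/(π^{n/2} δ^{n+2−β}). Then ∫_{B_δ(0)} (q ⊗ q)/‖q‖^β dq = (2/c^{δ,β}) I, where I is the n×n identity matrix. -/
/-!
Reflecting the `i`-th coordinate is an isometry of the ball that changes the sign of
`q i * q j` for `j ≠ i`, so the off-diagonal entries vanish. Swapping two coordinates shows
that the diagonal entries agree, so each one is `1/n` of the trace `∫_{B_δ} ‖q‖^(2-β)`.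
Polar coordinates turn the trace into `n ω_n ∫_0^δ t^(n+1-β) dt = n ω_n δ^(n+2-β)/(n+2-β)`,
where `ω_n = π^(n/2)/Γ(n/2+1)` is the volume of the unit ball.
-/

open MeasureTheory

/-- The normalization constant `c^{δ,β}` of the peridynamic kernel. -/
noncomputable def cdb (n : ℕ) (δ β : ℝ) : ℝ :=
  2 * (n + 2 - β) * Real.Gamma ((n : ℝ) / 2 + 1) /
    (Real.pi ^ ((n : ℝ) / 2) * δ ^ ((n : ℝ) + 2 - β))

open Set Metric Module

theorem Real.pow_pred_mul_rpow {k : ℕ} (hk : k ≠ 0) {y : ℝ} (hy : 0 < y) (s : ℝ) :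
    y ^ (k - 1) * y ^ s = y ^ ((k : ℝ) - 1 + s) := by
  rw [← Real.rpow_natCast, ← Real.rpow_add hy, Nat.cast_pred (Nat.pos_of_ne_zero hk)]

section Radial

variable {E F : Type*} [NormedAddCommGroup E] [NormedSpace ℝ E] [FiniteDimensional ℝ E]
  [MeasurableSpace E] [BorelSpace E] [Nontrivial E] [NormedAddCommGroup F] [NormedSpace ℝ F]
  (μ : Measure E) [μ.IsAddHaarMeasure]

theorem setIntegral_ball_fun_norm_addHaar (f : ℝ → F) (r : ℝ) :
    ∫ x in ball (0 : E) r, f ‖x‖ ∂μ =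
      finrank ℝ E • μ.real (ball 0 1) • ∫ y in Ioo 0 r, y ^ (finrank ℝ E - 1) • f y := by
  have hball :
      (ball (0 : E) r).indicator (fun x => f ‖x‖) = fun x => (Iio r).indicator f ‖x‖ := by
    ext x
    simp [indicator]
  rw [← integral_indicator measurableSet_ball, hball, integral_fun_norm_addHaar μ,
    ← indicator_smul, setIntegral_indicator measurableSet_Iio, Ioi_inter_Iio]

theorem integrableOn_ball_norm_rpow {s : ℝ} (hs : -(finrank ℝ E : ℝ) < s) (r : ℝ) :
    IntegrableOn (fun x : E => ‖x‖ ^ s) (ball 0 r) μ := by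
  rw [integrableOn_fun_norm_addHaar μ (f := fun y => y ^ s)]
  refine IntegrableOn.congr_fun ?_
    (fun y hy => (Real.pow_pred_mul_rpow finrank_pos.ne' hy.1 s).symm) measurableSet_Ioo
  exact (intervalIntegral.intervalIntegrable_rpow' (by linarith)).1.mono_set Ioo_subset_Ioc_self

theorem setIntegral_ball_norm_rpow {s r : ℝ} (hs : -(finrank ℝ E : ℝ) < s) (hr : 0 ≤ r) :
    ∫ x in ball (0 : E) r, ‖x‖ ^ s ∂μ =
      finrank ℝ E * μ.real (ball 0 1) * (r ^ (finrank ℝ E + s) / (finrank ℝ E + s)) := by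
  have hd : (finrank ℝ E : ℝ) + s ≠ 0 := by linarith
  have hexp : (finrank ℝ E : ℝ) - 1 + s + 1 = finrank ℝ E + s := by ring
  rw [setIntegral_ball_fun_norm_addHaar μ (fun y => y ^ s)]
  simp only [smul_eq_mul, nsmul_eq_mul]
  rw [setIntegral_congr_fun measurableSet_Ioo
      (fun y hy => Real.pow_pred_mul_rpow finrank_pos.ne' hy.1 s),
    ← integral_Ioc_eq_integral_Ioo, ← intervalIntegral.integral_of_le hr,
    integral_rpow (Or.inl (by linarith)), hexp, Real.zero_rpow hd, sub_zero,
    mul_assoc]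

end Radial

theorem setIntegral_ball_comp_linearIsometryEquiv {E F : Type*} [NormedAddCommGroup E]
    [InnerProductSpace ℝ E] [FiniteDimensional ℝ E] [MeasurableSpace E] [BorelSpace E]
    [NormedAddCommGroup F] [NormedSpace ℝ F] (e : E ≃ₗᵢ[ℝ] E) (f : E → F) (r : ℝ) :
    ∫ x in ball 0 r, f (e x) = ∫ x in ball 0 r, f x := by
  have h := e.measurePreserving.setIntegral_preimage_emb
    e.toMeasurableEquiv.measurableEmbedding f (ball 0 r)
  rwa [LinearIsometryEquiv.preimage_ball, map_zero] at h

namespace EuclideanSpace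

variable {ι : Type*} [Fintype ι]

theorem measureReal_ball_zero_one [Nonempty ι] :
    volume.real (ball (0 : EuclideanSpace ℝ ι) 1) =
      Real.pi ^ ((Fintype.card ι : ℝ) / 2) / Real.Gamma ((Fintype.card ι : ℝ) / 2 + 1) := by
  have hΓ := Real.Gamma_pos_of_pos (by positivity : (0 : ℝ) < Fintype.card ι / 2 + 1)
  rw [measureReal_def, volume_ball, ENNReal.ofReal_one, one_pow, one_mul,
    ENNReal.toReal_ofReal (by positivity), Real.sqrt_eq_rpow, ← Real.rpow_natCast,
    ← Real.rpow_mul Real.pi_pos.le, one_div_mul_eq_div]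

theorem integrableOn_coord_mul_coord_mul_norm {g : ℝ → ℝ} (hgm : Measurable g)
    {s : Set (EuclideanSpace ℝ ι)} (hg : IntegrableOn (fun q => ‖q‖ ^ 2 * g ‖q‖) s) (i j : ι) :
    IntegrableOn (fun q : EuclideanSpace ℝ ι => q i * q j * g ‖q‖) s := by
  refine hg.norm.mono' (by fun_prop) (.of_forall fun q => ?_)
  rw [norm_mul, norm_mul, norm_mul, norm_pow, norm_norm, sq]
  gcongr <;> exact PiLp.norm_apply_le q _

theorem setIntegral_ball_coord_mul_coord_mul_norm_of_ne (g : ℝ → ℝ) (r : ℝ) {i j : ι}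
    (hij : i ≠ j) :
    ∫ q in ball (0 : EuclideanSpace ℝ ι) r, q i * q j * g ‖q‖ = 0 := by
  classical
  let e : EuclideanSpace ℝ ι ≃ₗᵢ[ℝ] EuclideanSpace ℝ ι := LinearIsometryEquiv.piLpCongrRight 2
    fun k => if k = i then LinearIsometryEquiv.neg ℝ else LinearIsometryEquiv.refl ℝ ℝ
  have hodd : ∀ q, (e q) i * (e q) j * g ‖e q‖ = -(q i * q j * g ‖q‖) := fun q => by
    rw [e.norm_map]
    simp [e, LinearIsometryEquiv.piLpCongrRight_apply, hij.symm]
  have h := setIntegral_ball_comp_linearIsometryEquiv e (fun q => q i * q j * g ‖q‖) r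
  simp only [hodd, integral_neg] at h
  linarith

theorem setIntegral_ball_coord_mul_self_mul_norm_eq (g : ℝ → ℝ) (r : ℝ) (i j : ι) :
    ∫ q in ball (0 : EuclideanSpace ℝ ι) r, q i * q i * g ‖q‖ =
      ∫ q in ball (0 : EuclideanSpace ℝ ι) r, q j * q j * g ‖q‖ := by
  classical
  let e := LinearIsometryEquiv.piLpCongrLeft 2 ℝ ℝ (Equiv.swap i j)
  have hswap : ∀ q : EuclideanSpace ℝ ι, (e q) j = q i := fun q => by
    simp [e, LinearIsometryEquiv.piLpCongrLeft_apply, Equiv.piCongrLeft'_apply]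
  rw [← setIntegral_ball_comp_linearIsometryEquiv e (fun q => q j * q j * g ‖q‖) r]
  simp only [hswap, e.norm_map]

theorem card_mul_setIntegral_ball_coord_mul_self_mul_norm {g : ℝ → ℝ} {r : ℝ}
    (hg : ∀ k, IntegrableOn (fun q : EuclideanSpace ℝ ι => q k * q k * g ‖q‖) (ball 0 r))
    (i : ι) :
    Fintype.card ι * ∫ q in ball (0 : EuclideanSpace ℝ ι) r, q i * q i * g ‖q‖ =
      ∫ q in ball (0 : EuclideanSpace ℝ ι) r, ‖q‖ ^ 2 * g ‖q‖ := by
  simp_rw [real_norm_sq_eq, Finset.sum_mul, sq]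
  rw [integral_finsetSum _ fun k _ => hg k, ← nsmul_eq_mul, ← Finset.card_univ,
    ← Finset.sum_const]
  exact Finset.sum_congr rfl fun k _ => setIntegral_ball_coord_mul_self_mul_norm_eq g r i k

theorem setIntegral_ball_coord_mul_self_mul_norm_rpow_neg [Nonempty ι] {r β : ℝ} (hr : 0 ≤ r)
    (hβ : β < Fintype.card ι + 2) (i : ι) :
    ∫ q in ball (0 : EuclideanSpace ℝ ι) r, q i * q i * ‖q‖ ^ (-β) =
      Real.pi ^ ((Fintype.card ι : ℝ) / 2) / Real.Gamma ((Fintype.card ι : ℝ) / 2 + 1) *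
        (r ^ ((Fintype.card ι : ℝ) + 2 - β) / (Fintype.card ι + 2 - β)) := by
  -- only a.e.: at `q = 0` and `β = 2` the left side is `0` but the right side is `0 ^ 0 = 1`
  have hradial : (fun q : EuclideanSpace ℝ ι => ‖q‖ ^ 2 * ‖q‖ ^ (-β))
      =ᵐ[volume.restrict (ball 0 r)] fun q => ‖q‖ ^ (2 - β) := by
    filter_upwards [ae_restrict_of_ae (volume.ae_ne 0)] with q hq
    rw [← Real.rpow_two, ← Real.rpow_add (norm_pos_iff.2 hq), sub_eq_add_neg]
  have hs : -(finrank ℝ (EuclideanSpace ℝ ι) : ℝ) < 2 - β := by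
    rw [finrank_euclideanSpace]
    linarith
  have hint (k : ι) :
      IntegrableOn (fun q : EuclideanSpace ℝ ι => q k * q k * ‖q‖ ^ (-β)) (ball 0 r) :=
    integrableOn_coord_mul_coord_mul_norm (g := (· ^ (-β))) (by fun_prop)
      ((integrableOn_ball_norm_rpow volume hs r).congr_fun_ae hradial.symm) k k
  have htrace := card_mul_setIntegral_ball_coord_mul_self_mul_norm (g := (· ^ (-β))) hint i
  rw [integral_congr_ae hradial, setIntegral_ball_norm_rpow volume hs hr, finrank_euclideanSpace,
    measureReal_ball_zero_one, ← add_sub_assoc, mul_assoc] at htrace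
  exact mul_left_cancel₀ (Nat.cast_ne_zero.2 Fintype.card_ne_zero) htrace

end EuclideanSpace

theorem stmt2_general (n : ℕ) (δ β : ℝ) (hδ : 0 < δ) (hβ : β < n + 2) :
    (Matrix.of fun i j : Fin n =>
        ∫ q in Metric.ball (0 : EuclideanSpace ℝ (Fin n)) δ,
          q i * q j / ‖q‖ ^ β) =
      (2 / cdb n δ β) • (1 : Matrix (Fin n) (Fin n) ℝ) := by
  ext i j
  have : Nonempty (Fin n) := ⟨i⟩
  have hkernel (q : EuclideanSpace ℝ (Fin n)) :
      q i * q j / ‖q‖ ^ β = q i * q j * ‖q‖ ^ (-β) := by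
    rw [Real.rpow_neg (norm_nonneg q), div_eq_mul_inv]
  rw [Matrix.of_apply, setIntegral_congr_fun measurableSet_ball fun q _ => hkernel q,
    Matrix.smul_apply, Matrix.one_apply, smul_eq_mul]
  rcases eq_or_ne i j with rfl | hij
  · rw [EuclideanSpace.setIntegral_ball_coord_mul_self_mul_norm_rpow_neg hδ.le
      (by rwa [Fintype.card_fin]) i, Fintype.card_fin, if_pos rfl, mul_one, cdb]
    have : (0 : ℝ) < n + 2 - β := by linarith
    field_simp
  · rw [if_neg hij, mul_zero]
    exact EuclideanSpace.setIntegral_ball_coord_mul_coord_mul_norm_of_ne (· ^ (-β)) δ hij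

/-- `∫_{B_δ(0)} (q ⊗ q)/‖q‖^β dq = (2/c^{δ,β}) I`. -/
theorem stmt2 (n : ℕ) (hn : 1 ≤ n) (δ β : ℝ) (hδ : 0 < δ) (hβ : β < n + 2) :
    (Matrix.of fun i j : Fin n =>
        ∫ q in Metric.ball (0 : EuclideanSpace ℝ (Fin n)) δ,
          q i * q j / ‖q‖ ^ β) =
      (2 / cdb n δ β) • (1 : Matrix (Fin n) (Fin n) ℝ) :=
  stmt2_general n δ β hδ hβ
end

section
/- Let n ≥ 1, δ > 0, β < n+2, c^{δ,β} = 2(n+2−β)Γ(n/2+1)/(π^{n/2} δ^{n+2−β}), and μ > 0. For each nonzero ν ∈ ℝ^n, the quantity λ₂(ν) = (n+2) μ c^{δ,β} ∫_{B_δ(0)} (ν·w)/(‖ν‖² ‖w‖^{β+2}) (sin(ν·w) − ν·w) dw is strictly negative. -/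
open MeasureTheory

/-!
The integrand is `x (sin x - x) / (‖ν‖² ‖w‖^{β+2})` with `x = ν·w`. Since `|sin x| < |x|` for
`x ≠ 0`, it is negative off the hyperplane `ν·w = 0`, which is Lebesgue-null; since
`|sin x - x| ≤ |x|³/6`, it is bounded by `‖ν‖² ‖w‖^{2-β} / 6`, which is integrable near the
origin exactly when `β < n + 2`. So the integral is strictly negative, while the prefactor
`(n+2) μ c^{δ,β}` is positive.
-/

namespace Real

lemma mul_sin_sub_self_neg {x : ℝ} (hx : x ≠ 0) : x * (sin x - x) < 0 := by
  have : x * sin x < x * x := calc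
    x * sin x ≤ |x| * |sin x| := by rw [← abs_mul]; exact le_abs_self _
    _ < |x| * |x| := mul_lt_mul_of_pos_left (abs_sin_lt_abs hx) (abs_pos.mpr hx)
    _ = x * x := abs_mul_abs_self x
  linarith

lemma abs_mul_sin_sub_self_le (x : ℝ) : |x * (sin x - x)| ≤ |x| ^ 4 / 6 := calc
  |x * (sin x - x)| = |x| * |x - sin x| := by rw [abs_mul, abs_sub_comm]
  _ ≤ |x| * (|x| ^ 3 / 6) := mul_le_mul_of_nonneg_left (abs_sub_sin_le x) (abs_nonneg x)
  _ = |x| ^ 4 / 6 := by ring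

end Real

lemma cdb_pos {n : ℕ} {δ β : ℝ} (hδ : 0 < δ) (hβ : β < n + 2) : 0 < cdb n δ β := by
  have : 0 < (n : ℝ) + 2 - β := by linarith
  have := Real.Gamma_pos_of_pos (by positivity : (0 : ℝ) < n / 2 + 1)
  unfold cdb
  positivity

lemma integral_neg_of_ae_neg {α : Type*} [MeasurableSpace α] {μ : Measure α} [NeZero μ]
    {f : α → ℝ} (hf : ∀ᵐ x ∂μ, f x < 0) (hfi : Integrable f μ) : ∫ x, f x ∂μ < 0 := by
  suffices 0 < ∫ x, -f x ∂μ by rwa [integral_neg, neg_pos] at this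
  refine (integral_pos_iff_support_of_nonneg_ae (hf.mono fun x hx => ?_) hfi.neg).mpr ?_
  · exact (neg_pos.mpr hx).le
  · rw [pos_iff_ne_zero, Ne, measure_eq_zero_iff_ae_notMem]
    intro h
    obtain ⟨x, hx, hx0⟩ := (hf.and h).exists
    exact hx0 (neg_ne_zero.mpr hx.ne)

section Integrand

open Real

variable {E : Type*} [NormedAddCommGroup E] [InnerProductSpace ℝ E]

noncomputable def transverseIntegrand (β : ℝ) (ν w : E) : ℝ :=
  inner ℝ ν w / (‖ν‖ ^ 2 * ‖w‖ ^ (β + 2)) * (sin (inner ℝ ν w) - inner ℝ ν w)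

lemma transverseIntegrand_eq (β : ℝ) (ν w : E) :
    transverseIntegrand β ν w =
      inner ℝ ν w * (sin (inner ℝ ν w) - inner ℝ ν w) / (‖ν‖ ^ 2 * ‖w‖ ^ (β + 2)) :=
  div_mul_eq_mul_div _ _ _

lemma transverseIntegrand_neg {β : ℝ} {ν w : E} (h : inner ℝ ν w ≠ 0) :
    transverseIntegrand β ν w < 0 := by
  have hν : ν ≠ 0 := by rintro rfl; simp at h
  have hw : w ≠ 0 := by rintro rfl; simp at h
  rw [transverseIntegrand_eq]
  exact div_neg_of_neg_of_pos (mul_sin_sub_self_neg h) (by positivity)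

lemma norm_transverseIntegrand_le (β : ℝ) (ν w : E) :
    ‖transverseIntegrand β ν w‖ ≤ ‖ν‖ ^ 2 / 6 * ‖w‖ ^ (-(β - 2)) := by
  by_cases h : inner ℝ ν w = 0
  · simp only [transverseIntegrand, h, zero_div, sin_zero, sub_self, mul_zero, norm_zero]
    positivity
  have hν : 0 < ‖ν‖ := norm_pos_iff.mpr (by rintro rfl; simp at h)
  have hw : 0 < ‖w‖ := norm_pos_iff.mpr (by rintro rfl; simp at h)
  have hnum : |inner ℝ ν w * (sin (inner ℝ ν w) - inner ℝ ν w)| ≤ (‖ν‖ * ‖w‖) ^ 4 / 6 :=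
    (abs_mul_sin_sub_self_le _).trans <| by
      gcongr; exact abs_real_inner_le_norm ν w
  have hD : 0 < ‖ν‖ ^ 2 * ‖w‖ ^ (β + 2) := by positivity
  have hpow : ‖w‖ ^ (-(β - 2)) = ‖w‖ ^ 4 / ‖w‖ ^ (β + 2) := by
    rw [← rpow_natCast, ← rpow_sub hw]; congr 1; push_cast; ring
  rw [transverseIntegrand_eq, norm_div, Real.norm_eq_abs, Real.norm_of_nonneg hD.le,
    div_le_iff₀ hD, hpow]
  calc _ ≤ (‖ν‖ * ‖w‖) ^ 4 / 6 := hnum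
    _ = _ := by field_simp

variable [FiniteDimensional ℝ E] [MeasurableSpace E] [BorelSpace E]
  (μ : Measure E) [μ.IsAddHaarMeasure]

lemma addHaar_setOf_inner_eq_zero {ν : E} (hν : ν ≠ 0) : μ {w | inner ℝ ν w = 0} = 0 := by
  have hker : {w | inner ℝ ν w = 0} = (LinearMap.ker (innerₛₗ ℝ ν) : Set E) := rfl
  rw [hker]
  refine Measure.addHaar_submodule μ _ fun htop => hν ?_
  have : ν ∈ LinearMap.ker (innerₛₗ ℝ ν) := htop ▸ Submodule.mem_top
  exact inner_self_eq_zero.mp this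

lemma integrableOn_transverseIntegrand_ball {β δ : ℝ} (ν : E) (hd : 1 ≤ Module.finrank ℝ E)
    (hβ : β < Module.finrank ℝ E + 2) :
    IntegrableOn (transverseIntegrand β ν) (Metric.ball 0 δ) μ :=
  integrableOn_ball_of_norm_le_rpow hd (by linarith)
    (ae_of_all _ (norm_transverseIntegrand_le β ν))
    (by unfold transverseIntegrand; fun_prop)

lemma setIntegral_transverseIntegrand_ball_neg {β δ : ℝ} {ν : E} (hν : ν ≠ 0) (hδ : 0 < δ)
    (hd : 1 ≤ Module.finrank ℝ E) (hβ : β < Module.finrank ℝ E + 2) :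
    ∫ w in Metric.ball 0 δ, transverseIntegrand β ν w ∂μ < 0 := by
  have : NeZero (μ.restrict (Metric.ball 0 δ)) :=
    ⟨by simpa [Measure.restrict_eq_zero] using (Metric.measure_ball_pos μ 0 hδ).ne'⟩
  have h_off_hyperplane : ∀ᵐ w ∂μ, inner ℝ ν w ≠ 0 :=
    measure_eq_zero_iff_ae_notMem.mp (addHaar_setOf_inner_eq_zero μ hν)
  exact integral_neg_of_ae_neg
    (ae_restrict_of_ae (h_off_hyperplane.mono fun w => transverseIntegrand_neg))
    (integrableOn_transverseIntegrand_ball μ ν hd hβ)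

end Integrand

/-- The transverse eigenvalue `λ₂(ν)` of the peridynamic multiplier is strictly negative
for every nonzero `ν`. -/
theorem stmt3 (n : ℕ) (hn : 1 ≤ n) (δ β μ : ℝ) (hδ : 0 < δ) (hβ : β < n + 2)
    (hμ : 0 < μ) (ν : EuclideanSpace ℝ (Fin n)) (hν : ν ≠ 0) :
    ((n : ℝ) + 2) * μ * cdb n δ β *
      ∫ w in Metric.ball (0 : EuclideanSpace ℝ (Fin n)) δ,
        (inner ℝ ν w : ℝ) / (‖ν‖ ^ 2 * ‖w‖ ^ (β + 2)) *
          (Real.sin (inner ℝ ν w : ℝ) - (inner ℝ ν w : ℝ)) < 0 := by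
  have hc := cdb_pos hδ hβ
  have hI := setIntegral_transverseIntegrand_ball_neg volume hν hδ
    (by rwa [finrank_euclideanSpace_fin]) (by rwa [finrank_euclideanSpace_fin])
  exact mul_neg_of_pos_of_neg (by positivity) hI
end

section
/- Let n ≥ 2, ν ∈ ℝ^n nonzero, and let M = α₁ I + α₂ (ν ⊗ ν) with α₁ + α₂‖ν‖² < 0 and α₁ < 0. Then M is invertible and the operator norm (induced by the Euclidean vector norm) of M⁻¹ equals 1 / min{|α₁ + α₂‖ν‖²|, |α₁|}. -/
/-!
`M = α₁ I + α₂ ν νᵀ` acts as `α₁` on `ν^⊥` and as `α₁ + α₂ ‖ν‖²` on `ν`, so by the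
Sherman–Morrison formula `M⁻¹` is again a scalar plus a multiple of `ν νᵀ`, with eigenvalues
`α₁⁻¹` and `(α₁ + α₂ ‖ν‖²)⁻¹`. For an operator `T = a I + b v vᵀ` the identity
`‖v‖² ‖T x‖² = a² (‖v‖² ‖x‖² - ⟪v, x⟫²) + (a + b ‖v‖²)² ⟪v, x⟫²` together with Cauchy–Schwarz
bounds `‖T‖` by the larger absolute eigenvalue, and eigenvectors of both kinds (one orthogonal
to `v` exists as soon as the dimension is at least two) show the bound is attained.
-/

open InnerProductSpace Matrix
open scoped RealInnerProductSpace

lemma max_inv_eq_inv_min {α : Type*} [Field α] [LinearOrder α] [IsStrictOrderedRing α]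
    {x y : α} (hx : 0 < x) (hy : 0 < y) : max x⁻¹ y⁻¹ = (min x y)⁻¹ := by
  rcases le_total x y with h | h
  · rw [min_eq_left h, max_eq_left (inv_anti₀ hx h)]
  · rw [min_eq_right h, max_eq_right (inv_anti₀ hy h)]

section RankOnePerturbation

variable {E : Type*} [NormedAddCommGroup E] [InnerProductSpace ℝ E]

lemma smul_one_add_smul_rankOne_apply (a b : ℝ) (v x : E) :
    (a • 1 + b • rankOne ℝ v v) x = a • x + (b * ⟪v, x⟫) • v := by
  simp [mul_smul]

lemma norm_sq_smul_one_add_smul_rankOne_apply (a b : ℝ) (v x : E) :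
    ‖(a • 1 + b • rankOne ℝ v v) x‖ ^ 2
      = a ^ 2 * ‖x‖ ^ 2 + (2 * a * b + b ^ 2 * ‖v‖ ^ 2) * ⟪v, x⟫ ^ 2 := by
  rw [smul_one_add_smul_rankOne_apply, ← real_inner_self_eq_norm_sq,
    ← real_inner_self_eq_norm_sq x, ← real_inner_self_eq_norm_sq v]
  simp only [inner_add_left, inner_add_right, real_inner_smul_left, real_inner_smul_right,
    real_inner_comm x v]
  ring

lemma abs_le_opNorm_of_apply_eq_smul {T : E →L[ℝ] E} {c : ℝ} {x : E} (hx : x ≠ 0)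
    (hTx : T x = c • x) : |c| ≤ ‖T‖ := by
  have h := T.le_opNorm x
  rw [hTx, norm_smul, Real.norm_eq_abs] at h
  exact le_of_mul_le_mul_right h (norm_pos_iff.mpr hx)

lemma exists_ne_zero_inner_eq_zero [FiniteDimensional ℝ E] (hE : 2 ≤ Module.finrank ℝ E)
    {v : E} (hv : v ≠ 0) : ∃ w ≠ 0, ⟪v, w⟫ = 0 := by
  have hne : (ℝ ∙ v)ᗮ ≠ ⊥ := by
    intro h
    have := (ℝ ∙ v).finrank_add_finrank_orthogonal
    rw [h, finrank_bot, finrank_span_singleton hv] at this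
    omega
  obtain ⟨w, hw, hw0⟩ := Submodule.exists_mem_ne_zero_of_ne_bot hne
  exact ⟨w, hw0, Submodule.mem_orthogonal_singleton_iff_inner_right.mp hw⟩

lemma opNorm_smul_one_add_smul_rankOne_le (a b : ℝ) {v : E} (hv : v ≠ 0) :
    ‖a • 1 + b • rankOne ℝ v v‖ ≤ max |a| |a + b * ‖v‖ ^ 2| := by
  set μ := a + b * ‖v‖ ^ 2
  set K := max |a| |μ|
  refine ContinuousLinearMap.opNorm_le_bound _ (by positivity) fun x ↦ ?_
  have hs : 0 < ‖v‖ ^ 2 := by positivity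
  have hCS : 0 ≤ ‖v‖ ^ 2 * ‖x‖ ^ 2 - ⟪v, x⟫ ^ 2 := sub_nonneg.mpr <| by
    simpa [mul_pow] using pow_le_pow_left₀ (abs_nonneg _) (abs_real_inner_le_norm v x) 2
  have ha : a ^ 2 ≤ K ^ 2 := sq_le_sq.mpr ((le_max_left _ _).trans (le_abs_self K))
  have hμ : μ ^ 2 ≤ K ^ 2 := sq_le_sq.mpr ((le_max_right _ _).trans (le_abs_self K))
  have hsq : ‖v‖ ^ 2 * ‖(a • 1 + b • rankOne ℝ v v) x‖ ^ 2
      ≤ ‖v‖ ^ 2 * (K * ‖x‖) ^ 2 :=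
    calc ‖v‖ ^ 2 * ‖(a • 1 + b • rankOne ℝ v v) x‖ ^ 2
        = a ^ 2 * (‖v‖ ^ 2 * ‖x‖ ^ 2 - ⟪v, x⟫ ^ 2) + μ ^ 2 * ⟪v, x⟫ ^ 2 := by
          rw [norm_sq_smul_one_add_smul_rankOne_apply]; ring
      _ ≤ K ^ 2 * (‖v‖ ^ 2 * ‖x‖ ^ 2 - ⟪v, x⟫ ^ 2) + K ^ 2 * ⟪v, x⟫ ^ 2 := by
          gcongr
      _ = ‖v‖ ^ 2 * (K * ‖x‖) ^ 2 := by ring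
  exact (pow_le_pow_iff_left₀ (norm_nonneg _) (by positivity) two_ne_zero).mp
    (le_of_mul_le_mul_left hsq hs)

theorem opNorm_smul_one_add_smul_rankOne [FiniteDimensional ℝ E]
    (hE : 2 ≤ Module.finrank ℝ E) (a b : ℝ) {v : E} (hv : v ≠ 0) :
    ‖a • 1 + b • rankOne ℝ v v‖ = max |a| |a + b * ‖v‖ ^ 2| := by
  refine le_antisymm (opNorm_smul_one_add_smul_rankOne_le a b hv) (max_le ?_ ?_)
  · obtain ⟨w, hw, hvw⟩ := exists_ne_zero_inner_eq_zero hE hv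
    refine abs_le_opNorm_of_apply_eq_smul hw ?_
    rw [smul_one_add_smul_rankOne_apply, hvw, mul_zero, zero_smul, add_zero]
  · refine abs_le_opNorm_of_apply_eq_smul hv ?_
    rw [smul_one_add_smul_rankOne_apply, real_inner_self_eq_norm_sq, ← add_smul]

end RankOnePerturbation

namespace Matrix

lemma toEuclideanCLM_vecMulVec {𝕜 n : Type*} [RCLike 𝕜] [Fintype n] [DecidableEq n]
    (x y : EuclideanSpace 𝕜 n) :
    toEuclideanCLM (𝕜 := 𝕜) (vecMulVec x.ofLp (star y.ofLp)) = rankOne 𝕜 x y := by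
  refine ContinuousLinearMap.coe_injective ?_
  rw [coe_toEuclideanCLM_eq_toEuclideanLin, ← symm_toEuclideanLin_rankOne,
    LinearEquiv.apply_symm_apply]

lemma toEuclideanCLM_vecMulVec_self {n : Type*} [Fintype n] [DecidableEq n] (u : n → ℝ) :
    toEuclideanCLM (𝕜 := ℝ) (vecMulVec u u) = rankOne ℝ (WithLp.toLp 2 u) (WithLp.toLp 2 u) :=
  toEuclideanCLM_vecMulVec (WithLp.toLp 2 u) (WithLp.toLp 2 u)

section ShermanMorrison

variable {K n : Type*} [Field K] [Fintype n] [DecidableEq n]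

lemma smul_one_add_smul_vecMulVec_mul (a b c d : K) (u v : n → K) :
    (a • 1 + b • vecMulVec u v) * (c • 1 + d • vecMulVec u v)
      = (a * c) • 1 + (a * d + b * c + b * d * (v ⬝ᵥ u)) • vecMulVec u v := by
  simp only [add_mul, mul_add, smul_mul_smul, one_mul, mul_one, vecMulVec_mul_vecMulVec,
    vecMulVec_smul]
  module

lemma smul_one_add_smul_vecMulVec_mul_inverse {a b : K} (u v : n → K) (ha : a ≠ 0)
    (hab : a + b * (v ⬝ᵥ u) ≠ 0) :
    (a • 1 + b • vecMulVec u v) * (a⁻¹ • 1 + (-b / (a * (a + b * (v ⬝ᵥ u)))) • vecMulVec u v)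
      = 1 := by
  rw [smul_one_add_smul_vecMulVec_mul, mul_inv_cancel₀ ha, one_smul]
  have hcoef : a * (-b / (a * (a + b * (v ⬝ᵥ u)))) + b * a⁻¹
      + b * (-b / (a * (a + b * (v ⬝ᵥ u)))) * (v ⬝ᵥ u) = 0 := by
    field_simp
    ring
  rw [hcoef, zero_smul, add_zero]

end ShermanMorrison

end Matrix

/-- For `M = α₁ I + α₂ (ν ⊗ ν)` with both eigenvalues negative, `M` is invertible and
the operator norm of `M⁻¹` equals the reciprocal of the minimal absolute eigenvalue. -/
theorem stmt5 (n : ℕ) (hn : 2 ≤ n) (ν : Fin n → ℝ) (hν : ν ≠ 0) (α₁ α₂ : ℝ)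
    (h₁ : α₁ + α₂ * ∑ i, ν i ^ 2 < 0) (h₂ : α₁ < 0)
    (M : Matrix (Fin n) (Fin n) ℝ)
    (hM : M = α₁ • (1 : Matrix (Fin n) (Fin n) ℝ) + α₂ • Matrix.vecMulVec ν ν) :
    IsUnit M ∧
      ‖Matrix.toEuclideanCLM (𝕜 := ℝ) M⁻¹‖ =
        1 / min |α₁ + α₂ * ∑ i, ν i ^ 2| |α₁| := by
  set x : EuclideanSpace ℝ (Fin n) := WithLp.toLp 2 ν
  have hs : ∑ i, ν i ^ 2 = ν ⬝ᵥ ν := by simp [dotProduct, sq]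
  have hx : ‖x‖ ^ 2 = ν ⬝ᵥ ν := by rw [EuclideanSpace.real_norm_sq_eq, hs]
  rw [hs] at h₁ ⊢
  have hMN := smul_one_add_smul_vecMulVec_mul_inverse ν ν h₂.ne h₁.ne
  rw [← hM] at hMN
  refine ⟨(isUnit_iff_isUnit_det M).mpr (isUnit_det_of_right_inverse hMN), ?_⟩
  have hμ : α₁⁻¹ + -α₂ / (α₁ * (α₁ + α₂ * (ν ⬝ᵥ ν))) * ‖x‖ ^ 2 = (α₁ + α₂ * (ν ⬝ᵥ ν))⁻¹ := by
    rw [hx]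
    field_simp [h₂.ne, h₁.ne]
    ring
  rw [inv_eq_right_inv hMN, map_add, map_smul, map_smul, map_one, toEuclideanCLM_vecMulVec_self,
    opNorm_smul_one_add_smul_rankOne (by simpa using hn) _ _ (by simpa [x] using hν), hμ,
    abs_inv, abs_inv, max_inv_eq_inv_min (abs_pos.mpr h₂.ne) (abs_pos.mpr h₁.ne), min_comm,
    one_div]
end

section
/- Let n ≥ 1 and for each nonzero k ∈ ℤ^n let M_k be an invertible real symmetric n×n matrix whose eigenvalues λ satisfy |λ| ≥ C‖k‖^{θ} for all ‖k‖ ≥ r, where C, r > 0 and θ ≥ 0 are fixed. Given b ∈ H^s(𝕋^n) with b̂_0 = 0, define u by û_k = (M_k)^{−1} b̂_k for k ≠ 0 and û_0 = 0. Then u ∈ H^{s+θ}(𝕋^n). -/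
/-!
Outside a finite set of frequencies, all eigenvalues of the symmetric matrix `M_k` have modulus
at least `C‖k‖^θ`; diagonalising it in an orthonormal eigenbasis gives `C‖k‖^θ ‖û_k‖ ≤ ‖b̂_k‖`. Since
`1 + ‖k‖² ≤ 2‖k‖²` for `‖k‖ ≥ 1`, this yields
`(1 + ‖k‖²)^{s+θ} ‖û_k‖² ≤ 2^θ C⁻² (1 + ‖k‖²)^s ‖b̂_k‖²`, and the finitely many remaining
frequencies do not affect summability.
-/

/-- Euclidean norm of a multi-index `k ∈ ℤⁿ`. -/
noncomputable def znorm {n : ℕ} (k : Fin n → ℤ) : ℝ :=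
  Real.sqrt (∑ i, ((k i : ℝ)) ^ 2)

open Filter Module End Matrix WithLp

theorem LinearMap.IsSymmetric.mul_norm_le_norm_apply {𝕜 E : Type*} [RCLike 𝕜]
    [NormedAddCommGroup E] [InnerProductSpace 𝕜 E] [FiniteDimensional 𝕜 E]
    {T : E →ₗ[𝕜] E} (hT : T.IsSymmetric) {a : ℝ} (ha : 0 ≤ a)
    (h : ∀ μ, HasEigenvalue T μ → a ≤ ‖μ‖) (x : E) : a * ‖x‖ ≤ ‖T x‖ := by
  set B := hT.eigenvectorBasis rfl
  have hsq : (a * ‖x‖) ^ 2 ≤ ‖T x‖ ^ 2 := by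
    rw [← B.repr.norm_map x, ← B.repr.norm_map (T x), mul_pow, EuclideanSpace.norm_sq_eq,
      EuclideanSpace.norm_sq_eq, Finset.mul_sum]
    gcongr with i
    rw [hT.eigenvectorBasis_apply_self_apply, norm_mul, mul_pow]
    gcongr
    exact h _ (hT.hasEigenvalue_eigenvalues rfl i)
  exact (pow_le_pow_iff_left₀ (by positivity) (norm_nonneg _) two_ne_zero).1 hsq

theorem Matrix.IsHermitian.mul_norm_le_norm_of_mulVec_eq {𝕜 n : Type*} [RCLike 𝕜] [Fintype n]
    [DecidableEq n] {A : Matrix n n 𝕜} (hA : A.IsHermitian) {a : ℝ} (ha : 0 ≤ a)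
    (h : ∀ (μ : 𝕜) (v : n → 𝕜), v ≠ 0 → A *ᵥ v = μ • v → a ≤ ‖μ‖)
    {x y : EuclideanSpace 𝕜 n} (hxy : A *ᵥ ofLp x = ofLp y) : a * ‖x‖ ≤ ‖y‖ := by
  have hT : (toEuclideanLin A).IsSymmetric := isSymmetric_toEuclideanLin_iff.2 hA
  have hTx : toEuclideanLin A x = y := by
    rw [toLpLin_apply, hxy, toLp_ofLp]
  refine hTx ▸ hT.mul_norm_le_norm_apply ha (fun μ hμ => ?_) x
  obtain ⟨v, hv⟩ := hμ.exists_hasEigenvector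
  obtain ⟨hv, hv0⟩ := hasEigenvector_iff.1 hv
  refine h μ (ofLp v) (by simpa using hv0) ?_
  simpa [toLpLin_apply] using congrArg ofLp (mem_eigenspace_iff.1 hv)

theorem one_add_sq_rpow_add_mul_sq_le {z x y C s θ : ℝ} (hz : 1 ≤ z) (hθ : 0 ≤ θ) (hC : 0 < C)
    (hx : 0 ≤ x) (hxy : C * z ^ θ * x ≤ y) :
    (1 + z ^ 2) ^ (s + θ) * x ^ 2 ≤ 2 ^ θ / C ^ 2 * ((1 + z ^ 2) ^ s * y ^ 2) := by
  have hw : 0 < 1 + z ^ 2 := by positivity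
  have hwθ : (1 + z ^ 2) ^ θ ≤ 2 ^ θ * (z ^ θ) ^ 2 :=
    calc (1 + z ^ 2) ^ θ ≤ (2 * z ^ 2) ^ θ := Real.rpow_le_rpow hw.le (by nlinarith) hθ
      _ = 2 ^ θ * (z ^ θ) ^ 2 := by
        rw [Real.mul_rpow zero_le_two (by positivity), Real.rpow_pow_comm (by linarith)]
  have hCx : (C * (z ^ θ * x)) ^ 2 ≤ y ^ 2 :=
    pow_le_pow_left₀ (by positivity) (by linarith) 2
  calc (1 + z ^ 2) ^ (s + θ) * x ^ 2 = (1 + z ^ 2) ^ s * (1 + z ^ 2) ^ θ * x ^ 2 := by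
        rw [Real.rpow_add hw]
    _ ≤ (1 + z ^ 2) ^ s * (2 ^ θ * (z ^ θ) ^ 2) * x ^ 2 := by gcongr
    _ = 2 ^ θ / C ^ 2 * ((1 + z ^ 2) ^ s * (C * (z ^ θ * x)) ^ 2) := by
        field_simp
    _ ≤ 2 ^ θ / C ^ 2 * ((1 + z ^ 2) ^ s * y ^ 2) := by gcongr

section znorm

variable {n : ℕ}

@[simp]
theorem znorm_zero : znorm (0 : Fin n → ℤ) = 0 := by
  simp [znorm]

theorem znorm_nonneg (k : Fin n → ℤ) : 0 ≤ znorm k :=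
  Real.sqrt_nonneg _

theorem znorm_eq_norm (k : Fin n → ℤ) :
    znorm k = ‖(toLp 2 fun i => (k i : ℝ) : EuclideanSpace ℝ (Fin n))‖ := by
  simp [znorm, EuclideanSpace.norm_eq]

theorem norm_le_znorm (k : Fin n → ℤ) : ‖k‖ ≤ znorm k := by
  refine (pi_norm_le_iff_of_nonneg (znorm_nonneg k)).2 fun i => ?_
  rw [znorm_eq_norm, ← Int.norm_cast_real]
  exact PiLp.norm_apply_le (toLp 2 fun i => (k i : ℝ)) i

theorem tendsto_znorm_cofinite : Tendsto (znorm (n := n)) cofinite atTop := by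
  refine tendsto_atTop_mono norm_le_znorm ?_
  rw [← cocompact_eq_cofinite]
  exact tendsto_norm_cocompact_atTop

end znorm

theorem stmt11_general (n : ℕ)
    (M : (Fin n → ℤ) → Matrix (Fin n) (Fin n) ℝ)
    (hsymm : ∀ k, (M k).IsSymm)
    (hinv : ∀ k, k ≠ 0 → IsUnit (M k))
    (C r θ : ℝ) (hC : 0 < C) (hθ : 0 ≤ θ)
    (heig : ∀ k : Fin n → ℤ, k ≠ 0 → r ≤ znorm k →
      ∀ (lam : ℝ) (v : Fin n → ℝ), v ≠ 0 → (M k).mulVec v = lam • v →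
        C * znorm k ^ θ ≤ |lam|)
    (s : ℝ) (b : (Fin n → ℤ) → EuclideanSpace ℝ (Fin n))
    (hb : Summable fun k => (1 + znorm k ^ 2) ^ s * ‖b k‖ ^ 2)
    (u : (Fin n → ℤ) → EuclideanSpace ℝ (Fin n))
    (hu : ∀ k, k ≠ 0 → (u k : Fin n → ℝ) = (M k)⁻¹.mulVec (b k)) :
    Summable fun k => (1 + znorm k ^ 2) ^ (s + θ) * ‖u k‖ ^ 2 := by
  refine Summable.of_norm_bounded_eventually (hb.mul_left (2 ^ θ / C ^ 2)) ?_
  filter_upwards [tendsto_znorm_cofinite.eventually_ge_atTop (max r 1)] with k hk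
  have hk0 : k ≠ 0 := by
    rintro rfl
    simp at hk
    linarith
  have hMu : M k *ᵥ ofLp (u k) = ofLp (b k) := by
    rw [hu k hk0, mulVec_mulVec,
      mul_nonsing_inv _ ((M k).isUnit_iff_isUnit_det.1 (hinv k hk0)), one_mulVec]
  have hbound : C * znorm k ^ θ * ‖u k‖ ≤ ‖b k‖ :=
    (isHermitian_iff_isSymm.2 (hsymm k)).mul_norm_le_norm_of_mulVec_eq
      (mul_nonneg hC.le (Real.rpow_nonneg (znorm_nonneg k) θ))
      (heig k hk0 (le_of_max_le_left hk)) hMu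
  rw [Real.norm_of_nonneg (by positivity)]
  exact one_add_sq_rpow_add_mul_sq_le (le_of_max_le_right hk) hθ hC (norm_nonneg _) hbound

/-- Regularity of the solution of the peridynamic equilibrium equation:
if the eigenvalues of `M_k` grow at least like `C‖k‖^θ`, then `û_k = (M_k)⁻¹ b̂_k`
defines a distribution in `H^{s+θ}` whenever `b ∈ H^s`. -/
theorem stmt11 (n : ℕ) (hn : 1 ≤ n)
    (M : (Fin n → ℤ) → Matrix (Fin n) (Fin n) ℝ)
    (hsymm : ∀ k, (M k).IsSymm)
    (hinv : ∀ k, k ≠ 0 → IsUnit (M k))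
    (C r θ : ℝ) (hC : 0 < C) (hr : 0 < r) (hθ : 0 ≤ θ)
    (heig : ∀ k : Fin n → ℤ, k ≠ 0 → r ≤ znorm k →
      ∀ (lam : ℝ) (v : Fin n → ℝ), v ≠ 0 → (M k).mulVec v = lam • v →
        C * znorm k ^ θ ≤ |lam|)
    (s : ℝ) (b : (Fin n → ℤ) → EuclideanSpace ℝ (Fin n))
    (hb : Summable fun k => (1 + znorm k ^ 2) ^ s * ‖b k‖ ^ 2)
    (hb0 : b 0 = 0)
    (u : (Fin n → ℤ) → EuclideanSpace ℝ (Fin n))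
    (hu0 : u 0 = 0)
    (hu : ∀ k, k ≠ 0 → (u k : Fin n → ℝ) = (M k)⁻¹.mulVec (b k)) :
    Summable fun k => (1 + znorm k ^ 2) ^ (s + θ) * ‖u k‖ ^ 2 :=
  stmt11_general n M hsymm hinv C r θ hC hθ heig s b hb u hu
end
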